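/- Let n ≥ 3 be an integer, m = n − 1, ρ < 1/(2m), and let (x, y) be a solution of the system (S_ρ) on ℝ such that for all t ∈ ℝ: 0 < x(t) < 1, x′(t) < 0, y(t) > 0, y′(t) > 0, and (x(t), y(t)) → (1, 0) as t → −∞. Then y(t)/t → (n−2)(1−2(n−1)ρ) and t·x(t) → (1−(n−1)ρ)/(1−2(n−1)ρ) as t → +∞. -/

import Mathlib

/-!
The combination `w = y + (1 + m − 4mρ)·x` satisfies `w′ = (m−1)(1−2mρ)(1−x²)`. Since `x` decreases
to some `L ∈ [0, 1)`, `y` therefore grows linearly with slope `(m−1)(1−2mρ)(1−L²) > 0`. Writing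
`c = (m−1)(1−mρ)`, the `x`-equation gives `(1−2mρ)·x′ ≤ c − x·y`, so `x·y ≥ c + δ` for all large `t`
would push `x` below zero; this forces `L = 0` and makes `x·y < c + ε` happen at arbitrarily
large times. In the equation for `(x·y)′` the term `y·(c(1−x²) − x·y)` dominates once `y` is
large, so the level `x·y = c + ε` acts as a barrier, while `x′ < 0` gives `x·y > c(1−x²)`.
Hence `x·y → c` and `t·x = x·y / (y/t) → (1−mρ)/(1−2mρ)`.
-/

/-- `IsEinsteinSystemSol m ρ x y` means the pair of differentiable functions `(x, y)` solves
the planar system `(S_ρ)`: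
`(1 − 2mρ)·x′ = (m−1)(1−mρ)(1 − x²) − x·y` and
`(1 − 2mρ)·y′ = −m(m−1)(1−(m+1)ρ)(1 − x²) + (1 + m − 4mρ)·x·y`,
arising from rotationally symmetric gradient steady ρ-Einstein solitons. -/
def IsEinsteinSystemSol (m ρ : ℝ) (x y : ℝ → ℝ) : Prop :=
  Differentiable ℝ x ∧ Differentiable ℝ y ∧
    (∀ t : ℝ, (1 - 2 * m * ρ) * deriv x t =
      (m - 1) * (1 - m * ρ) * (1 - x t ^ 2) - x t * y t) ∧
    (∀ t : ℝ, (1 - 2 * m * ρ) * deriv y t =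
      -(m * (m - 1) * (1 - (m + 1) * ρ) * (1 - x t ^ 2)) + (1 + m - 4 * m * ρ) * x t * y t)

open Filter Set Topology

theorem eventually_lt_div_id_of_tendsto_deriv {f : ℝ → ℝ} (hf : Differentiable ℝ f) {a c : ℝ}
    (h : Tendsto (deriv f) atTop (𝓝 c)) (hac : a < c) : ∀ᶠ t in atTop, a < f t / t := by
  obtain ⟨a', haa', ha'c⟩ := exists_between hac
  obtain ⟨T, hT⟩ := eventually_atTop.1 (h.eventually (lt_mem_nhds ha'c))
  have hline : Tendsto (fun t => (f T + a' * (t - T)) / t) atTop (𝓝 a') := by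
    have h0 : Tendsto (fun t : ℝ => (f T - a' * T) * t⁻¹ + a') atTop
        (𝓝 ((f T - a' * T) * 0 + a')) :=
      (tendsto_inv_atTop_zero.const_mul _).add_const a'
    rw [mul_zero, zero_add] at h0
    refine h0.congr' ?_
    filter_upwards [eventually_ne_atTop 0] with t ht
    field_simp
    ring
  filter_upwards [hline.eventually (lt_mem_nhds haa'), eventually_ge_atTop T,
    eventually_gt_atTop 0] with t hlt hTt ht
  have hmvt : a' * (t - T) ≤ f t - f T :=
    (convex_Ici T).mul_sub_le_image_sub_of_le_deriv hf.continuous.continuousOn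
      hf.differentiableOn (fun s hs => (hT s (interior_subset hs)).le) T self_mem_Ici t hTt hTt
  exact hlt.trans_le (div_le_div_of_nonneg_right (by linarith) ht.le)

theorem tendsto_div_id_of_tendsto_deriv {f : ℝ → ℝ} (hf : Differentiable ℝ f) {c : ℝ}
    (h : Tendsto (deriv f) atTop (𝓝 c)) : Tendsto (fun t => f t / t) atTop (𝓝 c) := by
  refine tendsto_order.2
    ⟨fun a ha => eventually_lt_div_id_of_tendsto_deriv hf h ha, fun b hb => ?_⟩
  have hneg : Tendsto (deriv (-f)) atTop (𝓝 (-c)) := by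
    simpa only [deriv.neg'] using h.neg
  filter_upwards [eventually_lt_div_id_of_tendsto_deriv hf.neg hneg (neg_lt_neg hb)] with t ht
  rwa [Pi.neg_apply, neg_div, neg_lt_neg_iff] at ht

theorem tendsto_atBot_of_eventually_deriv_le_neg {f : ℝ → ℝ} (hf : Differentiable ℝ f) {δ : ℝ}
    (hδ : 0 < δ) (h : ∀ᶠ t in atTop, deriv f t ≤ -δ) : Tendsto f atTop atBot := by
  obtain ⟨T, hT⟩ := eventually_atTop.1 h
  have hline : Tendsto (fun t => f T + -δ * (t - T)) atTop atBot :=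
    tendsto_atBot_add_const_left _ _
      ((tendsto_atTop_add_const_right _ _ tendsto_id).const_mul_atTop_of_neg (neg_neg_of_pos hδ))
  refine tendsto_atBot_mono' _ ?_ hline
  filter_upwards [eventually_ge_atTop T] with t hTt
  have := (convex_Ici T).image_sub_le_mul_sub_of_deriv_le hf.continuous.continuousOn
      hf.differentiableOn (fun s hs => hT s (interior_subset hs)) T self_mem_Ici t hTt hTt
  linarith

theorem eventually_le_of_frequently_le_of_deriv_neg {f : ℝ → ℝ} (hf : Differentiable ℝ f) {c : ℝ}
    (hfreq : ∃ᶠ t in atTop, f t ≤ c) (hderiv : ∀ᶠ t in atTop, f t = c → deriv f t < 0) :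
    ∀ᶠ t in atTop, f t ≤ c := by
  obtain ⟨T, hT⟩ := eventually_atTop.1 hderiv
  obtain ⟨T₁, hTT₁, hfT₁⟩ := frequently_atTop.1 hfreq T
  filter_upwards [eventually_ge_atTop T₁] with t ht
  exact image_le_of_deriv_right_lt_deriv_boundary hf.continuous.continuousOn
    (fun s _ => (hf s).hasDerivAt.hasDerivWithinAt) hfT₁ (fun _ => hasDerivAt_const _ c)
    (fun s hs hfs => hT s (hTT₁.trans hs.1) hfs) ⟨ht, le_rfl⟩

namespace IsEinsteinSystemSol

variable {m ρ : ℝ} {x y : ℝ → ℝ}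

theorem deriv_y_add_mul_x (h : IsEinsteinSystemSol m ρ x y) (ha : 1 - 2 * m * ρ ≠ 0) (t : ℝ) :
    deriv (fun t => y t + (1 + m - 4 * m * ρ) * x t) t =
      (m - 1) * (1 - 2 * m * ρ) * (1 - x t ^ 2) := by
  obtain ⟨hdx, hdy, hX, hY⟩ := h
  rw [((hdy t).hasDerivAt.fun_add ((hdx t).hasDerivAt.const_mul _)).deriv]
  apply mul_left_cancel₀ ha
  linear_combination hY t + (1 + m - 4 * m * ρ) * hX t

theorem deriv_x_mul_y (h : IsEinsteinSystemSol m ρ x y) (t : ℝ) :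
    (1 - 2 * m * ρ) * deriv (fun t => x t * y t) t =
      y t * ((m - 1) * (1 - m * ρ) * (1 - x t ^ 2) - x t * y t) +
        x t * (-(m * (m - 1) * (1 - (m + 1) * ρ) * (1 - x t ^ 2)) +
          (1 + m - 4 * m * ρ) * (x t * y t)) := by
  obtain ⟨hdx, hdy, hX, hY⟩ := h
  rw [((hdx t).hasDerivAt.fun_mul (hdy t).hasDerivAt).deriv]
  linear_combination y t * hX t + x t * hY t

theorem tendsto_y_div_id (h : IsEinsteinSystemSol m ρ x y) (ha : 1 - 2 * m * ρ ≠ 0) {L : ℝ}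
    (hL : Tendsto x atTop (𝓝 L)) :
    Tendsto (fun t => y t / t) atTop (𝓝 ((m - 1) * (1 - 2 * m * ρ) * (1 - L ^ 2))) := by
  have hw : Tendsto (fun t => (y t + (1 + m - 4 * m * ρ) * x t) / t) atTop
      (𝓝 ((m - 1) * (1 - 2 * m * ρ) * (1 - L ^ 2))) :=
    tendsto_div_id_of_tendsto_deriv (h.2.1.fun_add (h.1.const_mul _))
      ((((by fun_prop : Continuous fun z : ℝ => (m - 1) * (1 - 2 * m * ρ) * (1 - z ^ 2)).tendsto
        L).comp hL).congr fun t => (h.deriv_y_add_mul_x ha t).symm)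
  have hx : Tendsto (fun t => (1 + m - 4 * m * ρ) * (x t / t)) atTop
      (𝓝 ((1 + m - 4 * m * ρ) * 0)) :=
    (hL.div_atTop tendsto_id).const_mul _
  rw [mul_zero] at hx
  simpa only [sub_zero] using (hw.sub hx).congr fun t => by ring

theorem tendsto_y_atTop (h : IsEinsteinSystemSol m ρ x y) (ha : 0 < 1 - 2 * m * ρ) (hm : 1 < m)
    {L : ℝ} (hL : Tendsto x atTop (𝓝 L)) (hL1 : L ^ 2 < 1) : Tendsto y atTop atTop := by
  have hslope : 0 < (m - 1) * (1 - 2 * m * ρ) * (1 - L ^ 2) :=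
    mul_pos (mul_pos (sub_pos.2 hm) ha) (sub_pos.2 hL1)
  refine ((h.tendsto_y_div_id ha.ne' hL).pos_mul_atTop hslope tendsto_id).congr' ?_
  filter_upwards [eventually_ne_atTop 0] with t ht
  exact div_mul_cancel₀ (y t) ht

theorem frequently_x_mul_y_lt (h : IsEinsteinSystemSol m ρ x y) (ha : 0 < 1 - 2 * m * ρ)
    (hm : 1 ≤ m) (hx : ∀ t, 0 < x t) {δ : ℝ} (hδ : 0 < δ) :
    ∃ᶠ t in atTop, x t * y t < (m - 1) * (1 - m * ρ) + δ := by
  intro hge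
  have hc : 0 ≤ (m - 1) * (1 - m * ρ) := mul_nonneg (by linarith) (by linarith)
  have hdecay : ∀ᶠ t in atTop, deriv x t ≤ -(δ / (1 - 2 * m * ρ)) := by
    filter_upwards [hge] with t ht
    rw [not_lt] at ht
    rw [← neg_div, le_div_iff₀ ha]
    linarith [h.2.2.1 t, mul_nonneg hc (sq_nonneg (x t))]
  obtain ⟨t, ht⟩ :=
    ((tendsto_atBot_of_eventually_deriv_le_neg h.1 (div_pos hδ ha) hdecay).eventually_lt_atBot
      0).exists
  exact lt_asymm (hx t) ht

theorem tendsto_x_zero (h : IsEinsteinSystemSol m ρ x y) (ha : 0 < 1 - 2 * m * ρ) (hm : 1 < m)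
    (hx : ∀ t, 0 < x t ∧ x t < 1) (hx' : ∀ t, deriv x t < 0) : Tendsto x atTop (𝓝 0) := by
  have hbdd : BddBelow (range x) := ⟨0, by rintro _ ⟨t, rfl⟩; exact (hx t).1.le⟩
  have hL := tendsto_atTop_ciInf (strictAnti_of_deriv_neg hx').antitone hbdd
  have hL0 : 0 ≤ ⨅ t, x t := le_ciInf fun t => (hx t).1.le
  rcases hL0.eq_or_lt with hLzero | hLpos
  · rwa [← hLzero] at hL
  have hy := h.tendsto_y_atTop ha hm hL (by nlinarith [(ciInf_le hbdd 0).trans_lt (hx 0).2])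
  have hxy : Tendsto (fun t => x t * y t) atTop atTop := by
    refine tendsto_atTop_mono' _ ?_ (hy.const_mul_atTop hLpos)
    filter_upwards [hy.eventually_ge_atTop 0] with t hyt
    exact mul_le_mul_of_nonneg_right (ciInf_le hbdd t) hyt
  exact (h.frequently_x_mul_y_lt ha hm.le (fun t => (hx t).1) one_pos
    ((hxy.eventually_ge_atTop _).mono fun t ht => not_lt.2 ht)).elim

theorem eventually_x_mul_y_le (h : IsEinsteinSystemSol m ρ x y) (ha : 0 < 1 - 2 * m * ρ)
    (hm : 1 ≤ m) (hx : ∀ t, 0 < x t ∧ x t < 1) (hy : Tendsto y atTop atTop) {ε : ℝ}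
    (hε : 0 < ε) : ∀ᶠ t in atTop, x t * y t ≤ (m - 1) * (1 - m * ρ) + ε := by
  set c := (m - 1) * (1 - m * ρ)
  set M := m * (m - 1) * (1 - (m + 1) * ρ)
  set k := 1 + m - 4 * m * ρ
  have hc : 0 ≤ c := mul_nonneg (by linarith) (by linarith)
  refine eventually_le_of_frequently_le_of_deriv_neg (h.1.fun_mul h.2.1)
    ((h.frequently_x_mul_y_lt ha hm (fun t => (hx t).1) hε).mono fun t ht => ht.le) ?_
  filter_upwards [hy.eventually_gt_atTop ((|M| + |k * (c + ε)|) / ε)] with t hyt hxy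
  have hd := h.deriv_x_mul_y t
  rw [hxy] at hd
  obtain ⟨hx0, hx1⟩ := hx t
  have hy0 : 0 ≤ y t := le_trans (by positivity) hyt.le
  have hdrift : y t * (c * (1 - x t ^ 2) - (c + ε)) ≤ -(ε * y t) := by
    linarith [mul_nonneg (mul_nonneg hc (sq_nonneg (x t))) hy0]
  have hbounded : x t * (-(M * (1 - x t ^ 2)) + k * (c + ε)) ≤ |M| + |k * (c + ε)| := by
    have hs0 : 0 ≤ x t * (1 - x t ^ 2) := mul_nonneg hx0.le (by nlinarith)
    have hs1 : x t * (1 - x t ^ 2) ≤ 1 := by nlinarith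
    linarith [mul_nonneg (neg_le_iff_add_nonneg.1 (neg_abs_le M)) hs0,
      mul_nonneg (abs_nonneg M) (sub_nonneg.2 hs1),
      mul_nonneg (sub_nonneg.2 (le_abs_self (k * (c + ε)))) hx0.le,
      mul_nonneg (abs_nonneg (k * (c + ε))) (sub_nonneg.2 hx1.le)]
  have hlarge : |M| + |k * (c + ε)| < ε * y t := (div_lt_iff₀' hε).1 hyt
  exact neg_of_mul_neg_right (by linarith) ha.le

theorem tendsto_x_mul_y (h : IsEinsteinSystemSol m ρ x y) (ha : 0 < 1 - 2 * m * ρ)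
    (hm : 1 ≤ m) (hx : ∀ t, 0 < x t ∧ x t < 1) (hx' : ∀ t, deriv x t < 0)
    (hx0 : Tendsto x atTop (𝓝 0)) (hy : Tendsto y atTop atTop) :
    Tendsto (fun t => x t * y t) atTop (𝓝 ((m - 1) * (1 - m * ρ))) := by
  refine tendsto_order.2 ⟨fun b hb => ?_, fun b hb => ?_⟩
  · have hlow : Tendsto (fun t => (m - 1) * (1 - m * ρ) * (1 - x t ^ 2)) atTop
        (𝓝 ((m - 1) * (1 - m * ρ))) := by
      simpa using ((hx0.pow 2).const_sub 1).const_mul ((m - 1) * (1 - m * ρ))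
    filter_upwards [hlow.eventually (lt_mem_nhds hb)] with t ht
    linarith [h.2.2.1 t, mul_neg_of_pos_of_neg ha (hx' t)]
  · filter_upwards [h.eventually_x_mul_y_le ha hm hx hy (half_pos (sub_pos.2 hb))] with t ht
    linarith

end IsEinsteinSystemSol

theorem soliton_trajectory_rates_general (n : ℕ) (hn : 3 ≤ n) (m ρ : ℝ)
    (hm : m = (n : ℝ) - 1) (hρ : ρ < 1 / (2 * m)) (x y : ℝ → ℝ)
    (hsol : IsEinsteinSystemSol m ρ x y)
    (hx : ∀ t : ℝ, 0 < x t ∧ x t < 1) (hx' : ∀ t : ℝ, deriv x t < 0) :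
    Filter.Tendsto (fun t => y t / t) Filter.atTop
        (nhds (((n : ℝ) - 2) * (1 - 2 * ((n : ℝ) - 1) * ρ))) ∧
      Filter.Tendsto (fun t => t * x t) Filter.atTop
        (nhds ((1 - ((n : ℝ) - 1) * ρ) / (1 - 2 * ((n : ℝ) - 1) * ρ))) := by
  have hm1 : 1 < m := by
    rw [hm, lt_sub_iff_add_lt]
    exact_mod_cast hn
  have ha : 0 < 1 - 2 * m * ρ := by
    have := (lt_div_iff₀ (by linarith : (0 : ℝ) < 2 * m)).1 hρ
    linarith
  have hx0 := hsol.tendsto_x_zero ha hm1 hx hx'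
  have hy := hsol.tendsto_y_atTop ha hm1 hx0 (by norm_num)
  have hslope := hsol.tendsto_y_div_id ha.ne' hx0
  rw [zero_pow two_ne_zero, sub_zero, mul_one] at hslope
  have hrate := (hsol.tendsto_x_mul_y ha hm1.le hx hx' hx0 hy).div hslope
    (mul_ne_zero (sub_ne_zero.2 hm1.ne') ha.ne')
  rw [mul_div_mul_left _ _ (sub_ne_zero.2 hm1.ne')] at hrate
  subst hm
  refine ⟨by convert hslope using 2; ring, hrate.congr' ?_⟩
  filter_upwards [hy.eventually_gt_atTop 0, eventually_ne_atTop 0] with t hyt ht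
  rw [Pi.div_apply]
  field_simp

/-- Quantitative rates of Proposition 4.4: along the soliton trajectory (`ρ < 1/(2m)`),
`y(t)/t → (n−2)(1−2(n−1)ρ)` and `t·x(t) → (1−(n−1)ρ)/(1−2(n−1)ρ)` as `t → +∞`. -/
theorem soliton_trajectory_rates (n : ℕ) (hn : 3 ≤ n) (m ρ : ℝ)
    (hm : m = (n : ℝ) - 1) (hρ : ρ < 1 / (2 * m)) (x y : ℝ → ℝ)
    (hsol : IsEinsteinSystemSol m ρ x y)
    (hx : ∀ t : ℝ, 0 < x t ∧ x t < 1) (hx' : ∀ t : ℝ, deriv x t < 0)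
    (hy : ∀ t : ℝ, 0 < y t) (hy' : ∀ t : ℝ, 0 < deriv y t)
    (hlim : Filter.Tendsto (fun t => (x t, y t)) Filter.atBot (nhds (1, 0))) :
    Filter.Tendsto (fun t => y t / t) Filter.atTop
        (nhds (((n : ℝ) - 2) * (1 - 2 * ((n : ℝ) - 1) * ρ))) ∧
      Filter.Tendsto (fun t => t * x t) Filter.atTop
        (nhds ((1 - ((n : ℝ) - 1) * ρ) / (1 - 2 * ((n : ℝ) - 1) * ρ))) :=
  soliton_trajectory_rates_general n hn m ρ hm hρ x y hsol hx hx'
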